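/- Every bounded set X in n-dimensional Euclidean space ℝ^n with d(X) > 0 can be written as a union of 2^{n−1} + 1 subsets, each of diameter strictly smaller than d(X); that is, b(X) ≤ 2^{n−1} + 1. -/

import Mathlib

/-!
Let `K` be the closure of the set, `d = diam K`, and `closedBall c r` the smallest ball containing
`K`. If every two contact points `x, y ∈ K ∩ sphere c r` had `⟪x - c, y - c⟫ ≥ 0`, some direction
would point into all of them and moving `c` along it would shrink the ball; so two contact points
form an obtuse angle at `c`, and `2 r² < d²`.

Fix a contact point `p` and the unit vector `u` from `p` to `c`. The cap of `K` where
`⟪u, x - c⟫ ≤ -4r/5` lies in a ball of radius `3r/5`, and `6r/5 < d`. The rest of `K` is cut along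
the `2^(n-1)` orthants of the hyperplane `u^⊥`. In one such piece `⟪x - c, y - c⟫` is at least the
product of the heights `⟪u, x - c⟫ ⟪u, y - c⟫`; if that product is negative, the point of positive
height is pushed towards `c` by `|x - p| ≤ d`, and `|x - y| < d` follows. All pieces are compact,
so these pointwise strict bounds are strict bounds on their diameters.
-/

open Metric Set Filter Topology Module
open scoped RealInnerProductSpace

section Metric

variable {α : Type*} [PseudoMetricSpace α]

def HasBorsukCover (m : ℕ) (X : Set α) : Prop :=
  ∃ Y : Fin m → Set α, X = ⋃ i, Y i ∧ ∀ i, diam (Y i) < diam X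

theorem hasBorsukCover_of_fintype {ι : Type*} [Fintype ι] {X : Set α} (Y : ι → Set α)
    (hXY : X = ⋃ i, Y i) (hY : ∀ i, diam (Y i) < diam X) :
    HasBorsukCover (Fintype.card ι) X :=
  ⟨Y ∘ (Fintype.equivFin ι).symm, hXY.trans ((Fintype.equivFin ι).symm.iSup_comp).symm,
    fun _ => hY _⟩

theorem HasBorsukCover.of_closure {m : ℕ} {X : Set α} (hX : Bornology.IsBounded X)
    (h : HasBorsukCover m (closure X)) : HasBorsukCover m X := by
  obtain ⟨Z, hZ, hdiam⟩ := h
  refine ⟨fun i => X ∩ Z i, ?_, fun i => ?_⟩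
  · rw [← inter_iUnion, ← hZ, inter_eq_left.mpr subset_closure]
  · calc diam (X ∩ Z i) ≤ diam (Z i) :=
          diam_mono inter_subset_right (hX.closure.subset (hZ ▸ subset_iUnion Z i))
      _ < diam X := diam_closure X ▸ hdiam i

theorem IsCompact.diam_lt_of_forall_dist_lt {s : Set α} (hs : IsCompact s) {D : ℝ} (hD : 0 < D)
    (h : ∀ x ∈ s, ∀ y ∈ s, dist x y < D) : diam s < D := by
  rcases s.eq_empty_or_nonempty with rfl | hne
  · simpa using hD
  obtain ⟨⟨x, y⟩, ⟨hx, hy⟩, hmax⟩ :=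
    (hs.prod hs).exists_isMaxOn (hne.prod hne) continuous_dist.continuousOn
  exact (diam_le_of_forall_dist_le dist_nonneg fun a ha b hb => hmax (mk_mem_prod ha hb)).trans_lt
    (h x hx y hy)

theorem exists_minimal_closedBall [ProperSpace α] {K : Set α} (hK : Bornology.IsBounded K)
    (hne : K.Nonempty) :
    ∃ c r, K ⊆ closedBall c r ∧ ∀ c' R, K ⊆ closedBall c' R → r ≤ R := by
  obtain ⟨x₀, hx₀⟩ := hne
  obtain ⟨R₀, hKR₀⟩ := hK.subset_closedBall x₀
  have hR₀ : 0 ≤ R₀ := dist_nonneg.trans (hKR₀ hx₀)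
  set S := {q : α × ℝ | K ⊆ closedBall q.1 q.2} ∩ closedBall x₀ R₀ ×ˢ Icc 0 R₀
  have hS : IsCompact S := by
    refine ((isCompact_closedBall x₀ R₀).prod isCompact_Icc).inter_left ?_
    simp only [subset_def, mem_closedBall, ofPred_forall]
    exact isClosed_biInter fun x _ =>
      isClosed_le (continuous_const.dist continuous_fst) continuous_snd
  have hx₀S : (x₀, R₀) ∈ S := ⟨hKR₀, mem_closedBall_self hR₀, hR₀, le_rfl⟩
  obtain ⟨⟨c, r⟩, ⟨hcr, -⟩, hmin⟩ := hS.exists_isMinOn ⟨_, hx₀S⟩ continuous_snd.continuousOn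
  refine ⟨c, r, hcr, fun c' R hR => ?_⟩
  rcases le_total R₀ R with h | h
  · exact (isMinOn_iff.mp hmin _ hx₀S).trans h
  · have hx₀c' : dist x₀ c' ≤ R := hR hx₀
    exact isMinOn_iff.mp hmin (c', R)
      ⟨hR, mem_closedBall'.mpr (hx₀c'.trans h), dist_nonneg.trans hx₀c', h⟩

end Metric

section InnerProductSpace

variable {E : Type*} [NormedAddCommGroup E] [InnerProductSpace ℝ E]

theorem norm_add_smul_sq (a v : E) (t : ℝ) :
    ‖a + t • v‖ ^ 2 = ‖a‖ ^ 2 + 2 * t * ⟪v, a⟫ + t ^ 2 * ‖v‖ ^ 2 := by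
  rw [norm_add_sq_real, real_inner_smul_right, norm_smul, Real.norm_eq_abs, mul_pow, sq_abs,
    real_inner_comm]
  ring

theorem exists_forall_inner_pos {T : Set E} (hT : IsCompact T) {c : E} (hc : c ∉ T)
    (h : ∀ x ∈ T, ∀ y ∈ T, 0 ≤ ⟪x - c, y - c⟫) : ∃ v, ∀ y ∈ T, 0 < ⟪v, y - c⟫ := by
  obtain ⟨t, htT, hcover⟩ := hT.elim_nhds_subcover (fun x => {y | 0 < ⟪x - c, y - c⟫})
    fun x hx => (isOpen_lt continuous_const (by fun_prop)).mem_nhds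
      (real_inner_self_pos.mpr (sub_ne_zero.mpr (ne_of_mem_of_not_mem hx hc)))
  refine ⟨∑ x ∈ t, (x - c), fun y hy => ?_⟩
  obtain ⟨x, hxt, hxy⟩ := mem_iUnion₂.mp (hcover hy)
  rw [sum_inner]
  exact Finset.sum_pos' (fun z hz => h z (htT z hz) y hy) ⟨x, hxt, hxy⟩

theorem exists_subset_ball_of_inner_pos {K : Set E} (hK : IsCompact K) {c v : E} {r : ℝ}
    (hKr : K ⊆ closedBall c r) (hv : ∀ x ∈ K, dist x c = r → 0 < ⟪v, x - c⟫) :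
    ∃ c', K ⊆ ball c' r := by
  have key : ∀ᶠ t in 𝓝 (0 : ℝ), ∀ x ∈ K,
      x ∈ closedBall c r → 0 < t → dist x (c + t • v) < r := by
    refine hK.eventually_forall_of_forall_eventually fun x hx => ?_
    rcases (mem_closedBall.mp (hKr hx)).lt_or_eq with hlt | heq
    · have hcont : Continuous fun z : ℝ × E => dist z.2 (c + z.1 • v) := by fun_prop
      filter_upwards [hcont.continuousAt.eventually (gt_mem_nhds (by simpa using hlt))]
        with z hz _ _ using hz
    · have hcont : Continuous fun z : ℝ × E => 2 * ⟪v, z.2 - c⟫ - z.1 * ‖v‖ ^ 2 := by fun_prop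
      filter_upwards [hcont.continuousAt.eventually (lt_mem_nhds
        (show (0 : ℝ) < 2 * ⟪v, x - c⟫ - 0 * ‖v‖ ^ 2 by simpa using hv x hx heq))]
        with ⟨t, z⟩ hz hzc ht
      have hr : 0 ≤ r := dist_nonneg.trans (mem_closedBall.mp hzc)
      have hsq : ‖(z - c) + (-t) • v‖ ^ 2 < r ^ 2 := by
        rw [norm_add_smul_sq, ← dist_eq_norm]
        nlinarith [mem_closedBall.mp hzc, dist_nonneg (x := z) (y := c), mul_pos ht hz]
      rw [dist_eq_norm, show z - (c + t • v) = (z - c) + (-t) • v by module]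
      exact lt_of_pow_lt_pow_left₀ 2 hr hsq
  obtain ⟨t, ht, ht0⟩ := ((key.filter_mono nhdsWithin_le_nhds).and
    (self_mem_nhdsWithin : Ioi (0 : ℝ) ∈ 𝓝[>] 0)).exists
  exact ⟨c + t • v, fun x hx => ht x hx (hKr hx) ht0⟩

theorem two_mul_sq_lt_sq_diam_of_minimal [ProperSpace E] {K : Set E} (hK : IsCompact K) {c : E}
    {r : ℝ} (hr : 0 < r) (hKr : K ⊆ closedBall c r)
    (hmin : ∀ c' R, K ⊆ closedBall c' R → r ≤ R) : 2 * r ^ 2 < diam K ^ 2 := by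
  set T := K ∩ sphere c r
  obtain ⟨x, hxT, y, hyT, hxy⟩ : ∃ x ∈ T, ∃ y ∈ T, ⟪x - c, y - c⟫ < 0 := by
    by_contra! h
    have hcT : c ∉ T := fun hc => hr.ne (by simpa using hc.2)
    obtain ⟨v, hv⟩ := exists_forall_inner_pos (hK.inter_right isClosed_sphere) hcT h
    obtain ⟨c', hc'⟩ := exists_subset_ball_of_inner_pos hK hKr fun x hx hxc => hv x ⟨hx, hxc⟩
    obtain ⟨R, hR, hKR⟩ := exists_lt_subset_ball hK.isClosed hc'
    exact hR.not_ge (hmin c' R (hKR.trans ball_subset_closedBall))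
  have hxc : ‖x - c‖ = r := by simpa [dist_eq_norm] using hxT.2
  have hyc : ‖y - c‖ = r := by simpa [dist_eq_norm] using hyT.2
  calc 2 * r ^ 2 < ‖(x - c) - (y - c)‖ ^ 2 := by rw [norm_sub_sq_real, hxc, hyc]; linarith
    _ = dist x y ^ 2 := by rw [sub_sub_sub_cancel_right, dist_eq_norm]
    _ ≤ diam K ^ 2 := by
      gcongr
      exact dist_le_diam_of_mem hK.isBounded hxT.1 hyT.1

theorem inner_eq_inner_mul_inner_add_inner_orthogonalProjectionOnto {u : E} (hu : ‖u‖ = 1)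
    (w w' : E) :
    ⟪w, w'⟫ = ⟪u, w⟫ * ⟪u, w'⟫ +
      ⟪(ℝ ∙ u)ᗮ.orthogonalProjectionOnto w, (ℝ ∙ u)ᗮ.orthogonalProjectionOnto w'⟫ := by
  rw [Submodule.inner_orthogonalProjectionOnto_eq_of_mem_left,
    Submodule.orthogonalProjectionOnto_orthogonal]
  simp only [Submodule.starProjection_unit_singleton ℝ hu, inner_sub_left, real_inner_smul_left]
  ring

end InnerProductSpace

section Orthant

variable {ι V : Type*} [Fintype ι] [NormedAddCommGroup V] [InnerProductSpace ℝ V]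

def orthant (b : OrthonormalBasis ι ℝ V) (σ : ι → Bool) : Set V :=
  {w | ∀ i, if σ i then 0 ≤ ⟪b i, w⟫ else ⟪b i, w⟫ ≤ 0}

theorem isClosed_orthant (b : OrthonormalBasis ι ℝ V) (σ : ι → Bool) :
    IsClosed (orthant b σ) := by
  simp only [orthant, ofPred_forall]
  refine isClosed_iInter fun i => ?_
  cases σ i
  · exact isClosed_le (by fun_prop) continuous_const
  · exact isClosed_le continuous_const (by fun_prop)

theorem mem_orthant_sign (b : OrthonormalBasis ι ℝ V) (w : V) :
    w ∈ orthant b fun i => decide (0 ≤ ⟪b i, w⟫) := fun i => by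
  by_cases h : 0 ≤ ⟪b i, w⟫ <;> simp [h, le_of_not_ge]

theorem inner_nonneg_of_mem_orthant {b : OrthonormalBasis ι ℝ V} {σ : ι → Bool} {w w' : V}
    (hw : w ∈ orthant b σ) (hw' : w' ∈ orthant b σ) : 0 ≤ ⟪w, w'⟫ := by
  rw [← b.sum_inner_mul_inner]
  refine Finset.sum_nonneg fun i _ => ?_
  have hi := hw i
  have hi' := hw' i
  rw [real_inner_comm (b i) w]
  split_ifs at hi hi'
  · exact mul_nonneg hi hi'
  · exact mul_nonneg_of_nonpos_of_nonpos hi hi'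

end Orthant

section Lassak

variable {E : Type*} [NormedAddCommGroup E] [InnerProductSpace ℝ E]

theorem norm_sub_le_six_fifths_of_inner_le {a b u : E} {r : ℝ} (hu : ‖u‖ = 1) (ha : ‖a‖ ≤ r)
    (hb : ‖b‖ ≤ r) (hau : ⟪u, a⟫ ≤ -(4 / 5 * r)) (hbu : ⟪u, b⟫ ≤ -(4 / 5 * r)) :
    ‖a - b‖ ≤ 6 / 5 * r := by
  have hr : 0 ≤ r := (norm_nonneg a).trans ha
  have hcap : ∀ {a : E}, ‖a‖ ≤ r → ⟪u, a⟫ ≤ -(4 / 5 * r) →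
      ‖a + (4 / 5 * r) • u‖ ≤ 3 / 5 * r := by
    intro a ha hau
    refine le_of_pow_le_pow_left₀ two_ne_zero (by positivity) ?_
    rw [norm_add_smul_sq, hu]
    nlinarith [norm_nonneg a]
  calc ‖a - b‖ = ‖(a + (4 / 5 * r) • u) - (b + (4 / 5 * r) • u)‖ := by
        rw [add_sub_add_right_eq_sub]
    _ ≤ 3 / 5 * r + 3 / 5 * r :=
        (norm_sub_le _ _).trans (add_le_add (hcap ha hau) (hcap hb hbu))
    _ = 6 / 5 * r := by ring

theorem norm_sub_lt_of_inner_mul_inner_le {a b u : E} {h r D : ℝ} (hu : ‖u‖ = 1)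
    (ha : ‖a‖ ≤ r) (hb : ‖b‖ ≤ r) (haD : ‖a + r • u‖ ≤ D) (hbD : ‖b + r • u‖ ≤ D)
    (hah : -h ≤ ⟪u, a⟫) (hbh : -h ≤ ⟪u, b⟫) (hab : ⟪u, a⟫ * ⟪u, b⟫ ≤ ⟪a, b⟫) (hhr : h < r)
    (hrD : 2 * r ^ 2 < D ^ 2) : ‖a - b‖ < D := by
  have hD : 0 ≤ D := (norm_nonneg _).trans haD
  have hfar : ∀ {a : E}, ‖a + r • u‖ ≤ D → ‖a‖ ^ 2 + 2 * r * ⟪u, a⟫ + r ^ 2 ≤ D ^ 2 := by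
    intro a haD
    have := pow_le_pow_left₀ (norm_nonneg _) haD 2
    rwa [norm_add_smul_sq, hu, one_pow, mul_one] at this
  have hfa := hfar haD
  have hfb := hfar hbD
  have ha2 := pow_le_pow_left₀ (norm_nonneg _) ha 2
  have hb2 := pow_le_pow_left₀ (norm_nonneg _) hb 2
  refine lt_of_pow_lt_pow_left₀ 2 hD ?_
  rw [norm_sub_sq_real]
  rcases le_or_gt 0 (⟪u, a⟫ * ⟪u, b⟫) with hst | hst
  · linarith
  -- opposite heights: `hfar` at the point of positive height `s` leaves at most `D² - 2 (r - h) s`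
  rcases lt_or_gt_of_ne (left_ne_zero_of_mul hst.ne) with hs | hs
  · have ht : 0 < ⟪u, b⟫ := pos_of_mul_neg_right hst hs.le
    nlinarith
  · have ht : ⟪u, b⟫ < 0 := neg_of_mul_neg_right hst hs.le
    nlinarith

variable {ι : Type*} [Fintype ι]

def lassakPiece (K : Set E) (c u : E) (h : ℝ) (b : OrthonormalBasis ι ℝ (ℝ ∙ u)ᗮ) :
    Option (ι → Bool) → Set E
  | none => {x ∈ K | ⟪u, x - c⟫ ≤ -h}
  | some σ => {x ∈ K | -h ≤ ⟪u, x - c⟫ ∧ (ℝ ∙ u)ᗮ.orthogonalProjectionOnto (x - c) ∈ orthant b σ}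

theorem lassakPiece_subset (K : Set E) (c u : E) (h : ℝ) (b : OrthonormalBasis ι ℝ (ℝ ∙ u)ᗮ)
    (i : Option (ι → Bool)) : lassakPiece K c u h b i ⊆ K := by
  rcases i with _ | σ <;> exact sep_subset _ _

theorem iUnion_lassakPiece (K : Set E) (c u : E) (h : ℝ) (b : OrthonormalBasis ι ℝ (ℝ ∙ u)ᗮ) :
    ⋃ i, lassakPiece K c u h b i = K := by
  refine Subset.antisymm (iUnion_subset (lassakPiece_subset K c u h b)) fun x hx => ?_
  rcases le_total ⟪u, x - c⟫ (-h) with hle | hge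
  · exact mem_iUnion.mpr ⟨none, hx, hle⟩
  · exact mem_iUnion.mpr ⟨some _, hx, hge, mem_orthant_sign b _⟩

theorem IsCompact.lassakPiece {K : Set E} (hK : IsCompact K) (c u : E) (h : ℝ)
    (b : OrthonormalBasis ι ℝ (ℝ ∙ u)ᗮ) (i : Option (ι → Bool)) :
    IsCompact (lassakPiece K c u h b i) := by
  have hheight : Continuous fun x => ⟪u, x - c⟫ := by fun_prop
  have hproj : Continuous fun x => (ℝ ∙ u)ᗮ.orthogonalProjectionOnto (x - c) := by fun_prop
  rcases i with _ | σ
  · exact hK.inter_right (isClosed_le hheight continuous_const)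
  · exact hK.inter_right ((isClosed_le continuous_const hheight).inter
      ((isClosed_orthant b σ).preimage hproj))

variable [FiniteDimensional ℝ E]

theorem hasBorsukCover_of_circumball {K : Set E} (hK : IsCompact K) {c p : E} {r : ℝ}
    (hr : 0 < r) (hKr : K ⊆ closedBall c r) (hp : p ∈ K) (hpc : dist p c = r)
    (hrD : 2 * r ^ 2 < diam K ^ 2) : HasBorsukCover (2 ^ (finrank ℝ E - 1) + 1) K := by
  set u : E := r⁻¹ • (c - p)
  have hcp : c - p = r • u := by simp [u, smul_smul, hr.ne']
  have hu : ‖u‖ = 1 := by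
    rw [norm_smul, ← dist_eq_norm, dist_comm, hpc, norm_inv, Real.norm_of_nonneg hr.le,
      inv_mul_cancel₀ hr.ne']
  have hfinrank : finrank ℝ (ℝ ∙ u)ᗮ = finrank ℝ E - 1 := by
    have := Submodule.finrank_add_finrank_orthogonal (ℝ ∙ u)
    rw [finrank_span_singleton (norm_ne_zero_iff.mp (hu ▸ one_ne_zero))] at this
    omega
  have hD : 0 < diam K := by nlinarith [diam_nonneg (s := K)]
  have hcard : Fintype.card (Option (Fin (finrank ℝ (ℝ ∙ u)ᗮ) → Bool)) =
      2 ^ (finrank ℝ E - 1) + 1 := by simp [hfinrank]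
  rw [← hcard]
  -- the cap height `4r/5` gives the cap radius `3r/5`, and `(6/5)² < 2`
  refine hasBorsukCover_of_fintype _
    (iUnion_lassakPiece K c u (4 / 5 * r) (stdOrthonormalBasis ℝ (ℝ ∙ u)ᗮ)).symm fun i =>
    (hK.lassakPiece _ _ _ _ i).diam_lt_of_forall_dist_lt hD fun x hx y hy => ?_
  have hxK := lassakPiece_subset _ _ _ _ _ i hx
  have hyK := lassakPiece_subset _ _ _ _ _ i hy
  have hxc : ‖x - c‖ ≤ r := mem_closedBall_iff_norm.mp (hKr hxK)
  have hyc : ‖y - c‖ ≤ r := mem_closedBall_iff_norm.mp (hKr hyK)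
  rw [dist_eq_norm, ← sub_sub_sub_cancel_right x y c]
  rcases i with _ | σ
  · calc ‖(x - c) - (y - c)‖ ≤ 6 / 5 * r :=
          norm_sub_le_six_fifths_of_inner_le hu hxc hyc hx.2 hy.2
      _ < diam K := by nlinarith
  · have hfar : ∀ z ∈ K, ‖(z - c) + r • u‖ ≤ diam K := fun z hz => by
      rw [← hcp, sub_add_sub_cancel, ← dist_eq_norm]
      exact dist_le_diam_of_mem hK.isBounded hz hp
    refine norm_sub_lt_of_inner_mul_inner_le hu hxc hyc (hfar x hxK) (hfar y hyK) hx.2.1 hy.2.1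
      ?_ (by linarith) hrD
    rw [inner_eq_inner_mul_inner_add_inner_orthogonalProjectionOnto hu (x - c)]
    exact le_add_of_nonneg_right (inner_nonneg_of_mem_orthant hx.2.2 hy.2.2)

theorem hasBorsukCover_of_isCompact {K : Set E} (hK : IsCompact K) (hd : 0 < diam K) :
    HasBorsukCover (2 ^ (finrank ℝ E - 1) + 1) K := by
  obtain ⟨x₀, hx₀⟩ : K.Nonempty := nonempty_iff_ne_empty.mpr fun h => by simp [h] at hd
  obtain ⟨c, r, hKr, hmin⟩ := exists_minimal_closedBall hK.isBounded ⟨x₀, hx₀⟩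
  have hr : 0 < r := by
    have := (diam_mono hKr isBounded_closedBall).trans
      (diam_closedBall (dist_nonneg.trans (hKr hx₀)))
    linarith
  obtain ⟨p, hp, hpmax⟩ :=
    hK.exists_isMaxOn ⟨x₀, hx₀⟩ (continuous_id.dist continuous_const).continuousOn
  have hpc : dist p c = r :=
    le_antisymm (hKr hp) (hmin c _ fun x hx => mem_closedBall.mpr (hpmax hx))
  exact hasBorsukCover_of_circumball hK hr hKr hp hpc
    (two_mul_sq_lt_sq_diam_of_minimal hK hr hKr hmin)

end Lassak

/-- Lassak: every bounded set X ⊆ ℝⁿ of positive diameter can be written as a union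
of 2^{n−1} + 1 subsets, each of diameter strictly smaller than d(X). -/
theorem borsuk_bound_lassak (n : ℕ)
    (X : Set (EuclideanSpace ℝ (Fin n))) (hX : Bornology.IsBounded X)
    (hd : 0 < Metric.diam X) :
    ∃ Y : Fin (2 ^ (n - 1) + 1) → Set (EuclideanSpace ℝ (Fin n)),
      X = ⋃ i, Y i ∧ ∀ i, Metric.diam (Y i) < Metric.diam X := by
  have h := hasBorsukCover_of_isCompact hX.isCompact_closure (by rwa [diam_closure])
  rw [finrank_euclideanSpace_fin] at h
  exact h.of_closure hX
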